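/- (Converse direction of Lemma 2, implicit in the paper's proofs.) Let ≈ be an SCER on strings over Σ, f a prefix encoding with respect to ≈, and D a dictionary. For every P_k ∈ D, every 1 ≤ j ≤ |P_k|, and every q ≥ 0, there exists i with 1 ≤ i ≤ j + 1 such that Fail^q(f(P_k)[:j]) = f(P_k[i:j]); that is, every element of the failure chain of the state f(P_k)[:j] is the encoding of a suffix of P_k[:j] and lies in Pref(f(D)). -/

import Mathlib

/-!
Along the failure chain we keep the invariant "the state is `f(P_k[i:j])` for some `i` and lies in
`Pref(f(D))`". A nonempty such state is also `f(P[:m])` for some `P ∈ D`, so `Fail` sends it to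
`f(P[l:m])`; since `f(P_k[i:j]) = f(P[:m])`, substring consistency gives
`f(P[l:m]) = f(P_k[i+l-1:j])`, again a suffix of `P_k[:j]`. The empty state is fixed by `Fail`.
-/

/-- The substring `X[i:j]` (1-indexed, inclusive; `ε` when `j < i`). -/
def seg {σ : Type*} (X : List σ) (i j : ℕ) : List σ := (X.take j).drop (i - 1)

/-- `Pref(f(D))`: the set of all prefixes (including `ε`) of the encoded
patterns; these are the states of the SCER automaton of `D`. -/
def PrefSet {σ π : Type*} (f : List σ → List π) (D : Finset (List σ)) :
    Set (List π) :=
  {S | ∃ P ∈ D, S <+: f P}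

/-- The index `i = min {l | 1 < l ≤ j + 1, f(P[l:j]) ∈ Pref(f(D))}` used in the
definition of the failure function. -/
noncomputable def failIdx {σ π : Type*} (f : List σ → List π)
    (D : Finset (List σ)) (P : List σ) (j : ℕ) : ℕ :=
  sInf {l | 1 < l ∧ l ≤ j + 1 ∧ f (seg P l j) ∈ PrefSet f D}

theorem seg_succ_self {σ : Type*} (X : List σ) (j : ℕ) : seg X (j + 1) j = [] := by
  simp [seg]

theorem seg_one {σ : Type*} (X : List σ) (j : ℕ) : seg X 1 j = X.take j := by
  simp [seg]

theorem length_seg_le {σ : Type*} (X : List σ) (i j : ℕ) : (seg X i j).length ≤ j + 1 - i := by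
  simp only [seg, List.length_drop, List.length_take]
  omega

theorem seg_take_self {σ : Type*} (X : List σ) (l m : ℕ) : seg (X.take m) l m = seg X l m := by
  simp only [seg, List.take_take, min_self]

theorem seg_seg_length {σ : Type*} (X : List σ) {i j l : ℕ} (hi : 1 ≤ i) (hl : 1 ≤ l) :
    seg (seg X i j) l (seg X i j).length = seg X (i + l - 1) j := by
  simp only [seg, List.take_length, List.drop_drop]
  congr 1
  omega

theorem failIdx_spec {σ π : Type*} {f : List σ → List π} {D : Finset (List σ)} (P : List σ)
    {m : ℕ} (hm : 1 ≤ m) (hD : f [] ∈ PrefSet f D) :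
    1 < failIdx f D P m ∧ failIdx f D P m ≤ m + 1 ∧ f (seg P (failIdx f D P m) m) ∈ PrefSet f D :=
  Nat.sInf_mem (s := {l | 1 < l ∧ l ≤ m + 1 ∧ f (seg P l m) ∈ PrefSet f D})
    ⟨m + 1, Nat.succ_lt_succ hm, le_rfl, by rwa [seg_succ_self]⟩

theorem f_seg_eq_of_f_eq {σ π : Type*} {R : List σ → List σ → Prop}
    (hsub : ∀ X Y, R X Y → ∀ i j, 1 ≤ i → i ≤ j → j ≤ X.length → R (seg X i j) (seg Y i j))
    {f : List σ → List π} (hf3 : ∀ X Y, f X = f Y ↔ R X Y) {X Y : List σ} {l m : ℕ}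
    (hXY : f X = f Y) (hl : 1 ≤ l) (hlm : l ≤ m + 1) (hm : m ≤ X.length) :
    f (seg X l m) = f (seg Y l m) := by
  obtain hlm | rfl := Nat.lt_succ_iff_lt_or_eq.mp (Nat.lt_succ_of_le hlm)
  · exact (hf3 _ _).mpr (hsub X Y ((hf3 X Y).mp hXY) l m hl (Nat.lt_succ_iff.mp hlm) hm)
  · rw [seg_succ_self, seg_succ_self]

theorem exists_fail_eq_f_seg {σ π : Type*} {R : List σ → List σ → Prop}
    (hsub : ∀ X Y, R X Y → ∀ i j, 1 ≤ i → i ≤ j → j ≤ X.length → R (seg X i j) (seg Y i j))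
    {f : List σ → List π} (hf1 : ∀ X, (f X).length = X.length)
    (hf2 : ∀ (X : List σ) (i : ℕ), 1 ≤ i → i ≤ X.length → f (X.take i) = (f X).take i)
    (hf3 : ∀ X Y, f X = f Y ↔ R X Y) {D : Finset (List σ)} {Fail : List π → List π}
    (hFail : ∀ P ∈ D, ∀ j : ℕ, 1 ≤ j → j ≤ P.length →
      Fail ((f P).take j) = f (seg P (failIdx f D P j) j))
    (hFailNil : Fail [] = []) {X : List σ} {i j : ℕ} (hi : 1 ≤ i)
    (hS : f (seg X i j) ∈ PrefSet f D) :
    ∃ i', 1 ≤ i' ∧ i' ≤ j + 1 ∧ Fail (f (seg X i j)) = f (seg X i' j) ∧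
      f (seg X i' j) ∈ PrefSet f D := by
  obtain ⟨P, hP, hpref⟩ := hS
  have hfnil : f [] = [] := List.length_eq_zero_iff.mp (hf1 [])
  have hD : f [] ∈ PrefSet f D := ⟨P, hP, hfnil ▸ List.nil_prefix⟩
  by_cases hY : seg X i j = []
  · refine ⟨j + 1, by omega, le_rfl, ?_, ?_⟩
    · rw [hY, seg_succ_self, hfnil, hFailNil]
    · rwa [seg_succ_self]
  set m := (seg X i j).length with hm_def
  have hm : 1 ≤ m := List.length_pos_iff.mpr hY
  have hmP : m ≤ P.length := by simpa only [hf1] using hpref.length_le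
  have hYP : f (seg X i j) = f (P.take m) := by
    rw [hf2 P m hm hmP, hm_def, ← hf1 (seg X i j)]
    exact List.prefix_iff_eq_take.mp hpref
  obtain ⟨hl1, hlm, hlmem⟩ := failIdx_spec P hm hD
  set l := failIdx f D P m
  have htransfer : f (seg X (i + l - 1) j) = f (seg P l m) := by
    rw [← seg_seg_length X hi (by omega : 1 ≤ l), ← seg_take_self P l m]
    exact f_seg_eq_of_f_eq hsub hf3 hYP (by omega) hlm le_rfl
  refine ⟨i + l - 1, by omega, ?_, ?_, htransfer ▸ hlmem⟩
  · have := length_seg_le X i j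
    omega
  · rw [hYP, hf2 P m hm hmP, hFail P hP m hm hmP, htransfer]

theorem fail_chain_is_suffix_general {σ π : Type*} (R : List σ → List σ → Prop)
    (hsub : ∀ X Y, R X Y → ∀ i j, 1 ≤ i → i ≤ j → j ≤ X.length →
      R (seg X i j) (seg Y i j))
    (f : List σ → List π)
    (hf1 : ∀ X, (f X).length = X.length)
    (hf2 : ∀ (X : List σ) (i : ℕ), 1 ≤ i → i ≤ X.length →
      f (X.take i) = (f X).take i)
    (hf3 : ∀ X Y, f X = f Y ↔ R X Y)
    (D : Finset (List σ))
    (Fail : List π → List π)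
    (hFail : ∀ P ∈ D, ∀ j : ℕ, 1 ≤ j → j ≤ P.length →
      Fail ((f P).take j) = f (seg P (failIdx f D P j) j))
    (hFailNil : Fail [] = [])
    (P_k : List σ) (hPk : P_k ∈ D) (j : ℕ)
    (hj : 1 ≤ j) (hjP : j ≤ P_k.length) (q : ℕ) :
    ∃ i, 1 ≤ i ∧ i ≤ j + 1 ∧ Fail^[q] ((f P_k).take j) = f (seg P_k i j) ∧
      f (seg P_k i j) ∈ PrefSet f D := by
  induction q with
  | zero =>
    refine ⟨1, le_rfl, by omega, ?_, ?_⟩ <;> rw [seg_one, hf2 P_k j hj hjP]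
    · rfl
    · exact ⟨P_k, hPk, List.take_prefix _ _⟩
  | succ q ih =>
    obtain ⟨i, hi, -, heq, hmem⟩ := ih
    rw [Function.iterate_succ_apply', heq]
    exact exists_fail_eq_f_seg hsub hf1 hf2 hf3 hFail hFailNil hi hmem

/-- Converse direction of Lemma 2.  Let `R` be an SCER, `f` a prefix encoding
w.r.t. `R`, `D` a dictionary, and `Fail` the failure function of the SCER
automaton, extended by `Fail ε = ε`.  For every `P_k ∈ D`, `1 ≤ j ≤ |P_k|` and
`q ≥ 0`, there is `i` with `1 ≤ i ≤ j + 1` such that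
`Fail^q(f(P_k)[:j]) = f(P_k[i:j])`; i.e. every element of the failure chain of
the state `f(P_k)[:j]` is the encoding of a suffix of `P_k[:j]` and lies in
`Pref(f(D))`. -/
theorem fail_chain_is_suffix {σ π : Type*} (R : List σ → List σ → Prop)
    (hequiv : Equivalence R)
    (hlen : ∀ X Y, R X Y → X.length = Y.length)
    (hsub : ∀ X Y, R X Y → ∀ i j, 1 ≤ i → i ≤ j → j ≤ X.length →
      R (seg X i j) (seg Y i j))
    (f : List σ → List π)
    (hf1 : ∀ X, (f X).length = X.length)
    (hf2 : ∀ (X : List σ) (i : ℕ), 1 ≤ i → i ≤ X.length →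
      f (X.take i) = (f X).take i)
    (hf3 : ∀ X Y, f X = f Y ↔ R X Y)
    (D : Finset (List σ))
    (Fail : List π → List π)
    (hFail : ∀ P ∈ D, ∀ j : ℕ, 1 ≤ j → j ≤ P.length →
      Fail ((f P).take j) = f (seg P (failIdx f D P j) j))
    (hFailNil : Fail [] = [])
    (P_k : List σ) (hPk : P_k ∈ D) (j : ℕ)
    (hj : 1 ≤ j) (hjP : j ≤ P_k.length) (q : ℕ) :
    ∃ i, 1 ≤ i ∧ i ≤ j + 1 ∧ Fail^[q] ((f P_k).take j) = f (seg P_k i j) ∧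
      f (seg P_k i j) ∈ PrefSet f D :=
  fail_chain_is_suffix_general R hsub f hf1 hf2 hf3 D Fail hFail hFailNil P_k hPk j hj hjP q
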